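/- Let a, α, c, γ ∈ [0, 1) and b, β ≥ 0 satisfy a + α ≤ 1, c ≤ a + b, and γ ≤ α + β. Then there exists a constant C > 0 such that for all t ≥ 0, ∫₀ᵗ dt' / ((t - t')^a ⟨t - t'⟩^b (t')^α ⟨t'⟩^β) ≤ C ⟨t⟩^{1 - c - γ}. -/
import Mathlib


open MeasureTheory Real Set intervalIntegral

noncomputable def Stmt2J (s : ℝ) : ℝ := Real.sqrt (1 + s^2)

lemma Stmt2J_pos (s : ℝ) : 0 < Stmt2J s := Real.sqrt_pos.2 (by nlinarith [sq_nonneg s])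

lemma one_le_Stmt2J (s : ℝ) : 1 ≤ Stmt2J s := by
  have := Real.sqrt_le_sqrt (show (1:ℝ) ≤ 1 + s^2 by nlinarith [sq_nonneg s])
  simpa [Stmt2J] using this

lemma self_le_Stmt2J {s : ℝ} (hs : 0 ≤ s) : s ≤ Stmt2J s := by
  rw [Stmt2J, show (1:ℝ) + s^2 = s^2 + 1 by ring]
  nlinarith [Real.sq_sqrt (show (0:ℝ) ≤ s^2+1 by positivity), Real.sqrt_nonneg (s^2+1),
    sq_nonneg (Real.sqrt (s^2+1) - s)]

lemma Stmt2J_le {s : ℝ} (hs : 0 ≤ s) : Stmt2J s ≤ 1 + s := by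
  rw [Stmt2J]
  calc Real.sqrt (1 + s^2) ≤ Real.sqrt ((1+s)^2) := Real.sqrt_le_sqrt (by nlinarith)
  _ = 1 + s := Real.sqrt_sq (by linarith)

lemma stmt2_half_rpow {x p q : ℝ} (hx : 1/2 ≤ x) (hq : 0 ≤ q) (hqp : q ≤ p) :
    x ^ q ≤ 2 ^ p * x ^ p := by
  have hx0 : (0:ℝ) < x := by linarith
  have h1 : (2*x) ^ q ≤ (2*x) ^ p := Real.rpow_le_rpow_of_exponent_le (by linarith) hqp
  rw [Real.mul_rpow (by norm_num) hx0.le, Real.mul_rpow (by norm_num) hx0.le] at h1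
  have h2 : x ^ q ≤ 2 ^ q * x ^ q :=
    le_mul_of_one_le_left (Real.rpow_nonneg hx0.le q) (Real.one_le_rpow one_le_two hq)
  linarith

lemma stmt2_inv_bound1 {X m u v : ℝ} (hm : 0 < m) (hX : m ≤ X) (hu : 0 ≤ u) (hv : 0 ≤ v) :
    1/(X^u * (Stmt2J X)^v) ≤ m^(-u) := by
  have hXu : m^u ≤ X^u := Real.rpow_le_rpow hm.le hX hu
  have h2 : (1:ℝ) ≤ (Stmt2J X)^v := Real.one_le_rpow (one_le_Stmt2J X) hv
  have h3 : m^u ≤ X^u * (Stmt2J X)^v :=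
    hXu.trans (le_mul_of_one_le_right (Real.rpow_nonneg (hm.le.trans hX) u) h2)
  rw [Real.rpow_neg hm.le, ← one_div]
  exact one_div_le_one_div_of_le (Real.rpow_pos_of_pos hm u) h3

lemma stmt2_inv_bound2 {X u v w : ℝ} (hX : 1/2 ≤ X) (hu : 0 ≤ u) (hv : 0 ≤ v) (hw : 0 ≤ w)
    (hwuv : w ≤ u + v) : 1/(X^u * (Stmt2J X)^v) ≤ 2^(u+v) * X^(-w) := by
  have hX0 : (0:ℝ) < X := by linarith
  have h1 : X^v ≤ (Stmt2J X)^v := Real.rpow_le_rpow hX0.le (self_le_Stmt2J hX0.le) hv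
  have h2 : X^(u+v) ≤ X^u * (Stmt2J X)^v := by
    rw [Real.rpow_add hX0]
    exact mul_le_mul_of_nonneg_left h1 (Real.rpow_nonneg hX0.le u)
  have h3 : X^w ≤ 2^(u+v) * X^(u+v) := stmt2_half_rpow hX hw hwuv
  have h4 : X^w ≤ 2^(u+v) * (X^u * (Stmt2J X)^v) :=
    h3.trans (mul_le_mul_of_nonneg_left h2 (Real.rpow_nonneg (by norm_num) _))
  have hP : (0:ℝ) < X^u * (Stmt2J X)^v :=
    mul_pos (Real.rpow_pos_of_pos hX0 u) (Real.rpow_pos_of_pos (Stmt2J_pos X) v)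
  rw [Real.rpow_neg hX0.le, ← one_div, mul_one_div,
    div_le_div_iff₀ hP (Real.rpow_pos_of_pos hX0 w), one_mul]
  exact h4

lemma stmt2_II_mono {f g : ℝ → ℝ} {u v : ℝ} (huv : u ≤ v)
    (hm : Measurable f)
    (hg : IntervalIntegrable g volume u v)
    (h0 : ∀ x ∈ Set.Ioo u v, 0 ≤ f x) (h : ∀ x ∈ Set.Ioo u v, f x ≤ g x) :
    IntervalIntegrable f volume u v := by
  rw [intervalIntegrable_iff_integrableOn_Ioc_of_le huv] at hg ⊢
  apply hg.mono' hm.aestronglyMeasurable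
  have heq : volume.restrict (Set.Ioc u v) = volume.restrict (Set.Ioo u v) :=
    (Measure.restrict_congr_set Ioo_ae_eq_Ioc).symm
  rw [heq, ae_restrict_iff' measurableSet_Ioo]
  filter_upwards with x hx
  rw [Real.norm_eq_abs, abs_of_nonneg (h0 x hx)]
  exact h x hx

lemma stmt2_int_mono_Ioo {f g : ℝ → ℝ} {u v : ℝ} (huv : u ≤ v)
    (hf : IntervalIntegrable f volume u v) (hg : IntervalIntegrable g volume u v)
    (h : ∀ x ∈ Set.Ioo u v, f x ≤ g x) :
    ∫ x in u..v, f x ≤ ∫ x in u..v, g x := by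
  apply intervalIntegral.integral_mono_ae_restrict huv hf hg
  have heq : volume.restrict (Set.Icc u v) = volume.restrict (Set.Ioo u v) :=
    (Measure.restrict_congr_set Ioo_ae_eq_Icc).symm
  rw [Filter.EventuallyLE, heq, ae_restrict_iff' measurableSet_Ioo]
  filter_upwards with x hx
  exact h x hx

lemma stmt2_lemA (p q r : ℝ) (hp0 : 0 ≤ p) (hp1 : p < 1) (hq : 0 ≤ q) (hr0 : 0 ≤ r) (hr1 : r < 1)
    (hpqr : r ≤ p + q) {T : ℝ} (hT : 1 ≤ T) :
    IntervalIntegrable (fun x => x ^ (-p) * (Stmt2J x) ^ (-q)) volume 0 T ∧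
    ∫ x in (0:ℝ)..T, x ^ (-p) * (Stmt2J x) ^ (-q) ≤ (1/(1-p) + 1/(1-r)) * T ^ (1-r) := by
  have hmeas : Measurable (fun x : ℝ => x ^ (-p) * (Stmt2J x) ^ (-q)) := by
    unfold Stmt2J; fun_prop
  have h0 : ∀ x ∈ Set.Ioo (0:ℝ) T, 0 ≤ x ^ (-p) * (Stmt2J x) ^ (-q) := fun x hx =>
    mul_nonneg (Real.rpow_nonneg hx.1.le _) (Real.rpow_nonneg (Stmt2J_pos x).le _)
  have hb1 : ∀ x ∈ Set.Ioo (0:ℝ) 1, x ^ (-p) * (Stmt2J x) ^ (-q) ≤ x ^ (-p) := by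
    intro x hx
    exact mul_le_of_le_one_right (Real.rpow_nonneg hx.1.le _)
      (Real.rpow_le_one_of_one_le_of_nonpos (one_le_Stmt2J x) (by linarith))
  have hb2 : ∀ x ∈ Set.Ioo (1:ℝ) T, x ^ (-p) * (Stmt2J x) ^ (-q) ≤ x ^ (-r) := by
    intro x hx
    have hx0 : (0:ℝ) < x := by linarith [hx.1]
    calc x ^ (-p) * (Stmt2J x) ^ (-q) ≤ x ^ (-p) * x ^ (-q) := by
          apply mul_le_mul_of_nonneg_left _ (Real.rpow_nonneg hx0.le _)
          exact Real.rpow_le_rpow_of_nonpos hx0 (self_le_Stmt2J hx0.le) (by linarith)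
      _ = x ^ (-p + -q) := (Real.rpow_add hx0 _ _).symm
      _ ≤ x ^ (-r) := Real.rpow_le_rpow_of_exponent_le hx.1.le (by linarith)
  have hIp : IntervalIntegrable (fun x : ℝ => x ^ (-p)) volume 0 1 :=
    intervalIntegrable_rpow' (by linarith)
  have hIr : IntervalIntegrable (fun x : ℝ => x ^ (-r)) volume 1 T := by
    apply (intervalIntegrable_rpow' (by linarith)).mono_set
    rw [Set.uIcc_of_le (by linarith : (0:ℝ) ≤ T), Set.uIcc_of_le hT]
    exact Set.Icc_subset_Icc (by norm_num) le_rfl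
  have hI1 : IntervalIntegrable (fun x => x ^ (-p) * (Stmt2J x) ^ (-q)) volume 0 1 :=
    stmt2_II_mono zero_le_one hmeas hIp (fun x hx => h0 x ⟨hx.1, lt_of_lt_of_le hx.2 hT⟩) hb1
  have hI2 : IntervalIntegrable (fun x => x ^ (-p) * (Stmt2J x) ^ (-q)) volume 1 T :=
    stmt2_II_mono hT hmeas hIr (fun x hx => h0 x ⟨by linarith [hx.1], hx.2⟩) hb2
  have hsplit := intervalIntegral.integral_add_adjacent_intervals hI1 hI2
  have e1 : ∫ x in (0:ℝ)..1, x ^ (-p) = 1/(1-p) := by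
    rw [integral_rpow (Or.inl (by linarith)), show -p + 1 = 1 - p by ring,
      Real.one_rpow, Real.zero_rpow (by linarith)]
    norm_num
  have e2 : ∫ x in (1:ℝ)..T, x ^ (-r) = (T ^ (1-r) - 1)/(1-r) := by
    rw [integral_rpow (Or.inl (by linarith)), show -r + 1 = 1 - r by ring, Real.one_rpow]
  have i1 : ∫ x in (0:ℝ)..1, x ^ (-p) * (Stmt2J x) ^ (-q) ≤ 1/(1-p) := by
    rw [← e1]; exact stmt2_int_mono_Ioo zero_le_one hI1 hIp hb1
  have i2 : ∫ x in (1:ℝ)..T, x ^ (-p) * (Stmt2J x) ^ (-q) ≤ (T ^ (1-r) - 1)/(1-r) := by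
    rw [← e2]; exact stmt2_int_mono_Ioo hT hI2 hIr hb2
  refine ⟨hI1.trans hI2, ?_⟩
  rw [← hsplit]
  have hT1 : (1:ℝ) ≤ T ^ (1-r) := Real.one_le_rpow hT (by linarith)
  have hp' : (0:ℝ) < 1 - p := by linarith
  have hr' : (0:ℝ) < 1 - r := by linarith
  have A : 1/(1-p) ≤ (1/(1-p)) * T ^ (1-r) := le_mul_of_one_le_right (by positivity) hT1
  have B : (T ^ (1-r) - 1)/(1-r) ≤ (1/(1-r)) * T ^ (1-r) := by
    rw [one_div_mul_eq_div]
    gcongr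
    linarith
  rw [add_mul]
  exact add_le_add (i1.trans A) (i2.trans B)

set_option maxHeartbeats 1600000 in
theorem stmt_2 (a α c γ b β : ℝ)
    (ha : a ∈ Set.Ico (0:ℝ) 1) (hα : α ∈ Set.Ico (0:ℝ) 1)
    (hc : c ∈ Set.Ico (0:ℝ) 1) (hγ : γ ∈ Set.Ico (0:ℝ) 1)
    (hb : 0 ≤ b) (hβ : 0 ≤ β)
    (h1 : a + α ≤ 1) (h2 : c ≤ a + b) (h3 : γ ≤ α + β) :
    ∃ C > 0, ∀ t ≥ (0:ℝ),
      (∫ t' in (0:ℝ)..t,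
          1 / ((t - t')^a * (Real.sqrt (1 + (t - t')^2))^b * t'^α * (Real.sqrt (1 + t'^2))^β))
        ≤ C * (Real.sqrt (1 + t^2)) ^ (1 - c - γ) := by
  obtain ⟨ha0, ha1⟩ := ha
  obtain ⟨hα0, hα1⟩ := hα
  obtain ⟨hc0, hc1⟩ := hc
  obtain ⟨hγ0, hγ1⟩ := hγ
  have e1a : (0:ℝ) < 1 - a := by linarith
  have e1α : (0:ℝ) < 1 - α := by linarith
  have e1c : (0:ℝ) < 1 - c := by linarith
  have e1γ : (0:ℝ) < 1 - γ := by linarith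
  obtain ⟨Cg, hCgdef⟩ : ∃ x : ℝ, x = 1/(1-α) + 1/(1-γ) := ⟨_, rfl⟩
  obtain ⟨Ch, hChdef⟩ : ∃ x : ℝ, x = 1/(1-a) + 1/(1-c) := ⟨_, rfl⟩
  have hCg0 : 0 < Cg := hCgdef ▸ add_pos (one_div_pos.2 e1α) (one_div_pos.2 e1γ)
  have hCh0 : 0 < Ch := hChdef ▸ add_pos (one_div_pos.2 e1a) (one_div_pos.2 e1c)
  have hK10 : (0:ℝ) < 2^(a+b) * 4^c :=
    mul_pos (Real.rpow_pos_of_pos two_pos _) (Real.rpow_pos_of_pos (by norm_num) _)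
  have hK20 : (0:ℝ) < 2^(α+β) * 4^γ :=
    mul_pos (Real.rpow_pos_of_pos two_pos _) (Real.rpow_pos_of_pos (by norm_num) _)
  have hS0 : (0:ℝ) < 1/(1-a) + 1/(1-α) := add_pos (one_div_pos.2 e1a) (one_div_pos.2 e1α)
  obtain ⟨C, hCdef⟩ : ∃ x : ℝ,
      x = 2*(1/(1-a) + 1/(1-α)) + (2^(a+b) * 4^c) * Cg + (2^(α+β) * 4^γ) * Ch := ⟨_, rfl⟩
  have hC0 : 0 < C := by
    rw [hCdef]
    have h01 := mul_pos hK10 hCg0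
    have h02 := mul_pos hK20 hCh0
    linarith
  refine ⟨C, hC0, ?_⟩
  intro t ht
  -- pass to the Stmt2J formulation
  suffices hmain : (∫ t' in (0:ℝ)..t,
      1 / ((t - t')^a * (Stmt2J (t - t'))^b * t'^α * (Stmt2J t')^β))
      ≤ C * (Stmt2J t) ^ (1 - c - γ) by
    simpa only [Stmt2J] using hmain
  obtain ⟨f, hfdef⟩ : ∃ f : ℝ → ℝ,
      f = fun x => 1 / ((t - x)^a * (Stmt2J (t - x))^b * x^α * (Stmt2J x)^β) := ⟨_, rfl⟩
  rw [show (fun t' => 1 / ((t - t')^a * (Stmt2J (t - t'))^b * t'^α * (Stmt2J t')^β)) = f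
    from hfdef.symm]
  have hfm : Measurable f := by rw [hfdef]; unfold Stmt2J; fun_prop
  have hJt : 0 < Stmt2J t := Stmt2J_pos t
  rcases eq_or_lt_of_le ht with htz | htpos
  · rw [← htz, intervalIntegral.integral_same]
    exact mul_nonneg hC0.le (Real.rpow_nonneg (Stmt2J_pos 0).le _)
  have ht2 : (0:ℝ) < t/2 := by linarith
  have h2t : t/2 ≤ t := by linarith
  -- decomposition of f on (0, t)
  have hfsplit : ∀ x ∈ Set.Ioo (0:ℝ) t, f x =
      (1/((t-x)^a * (Stmt2J (t-x))^b)) * (1/(x^α * (Stmt2J x)^β)) := by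
    intro x hx
    rw [hfdef]
    simp only
    rw [show (t-x)^a * (Stmt2J (t-x))^b * x^α * (Stmt2J x)^β
      = ((t-x)^a * (Stmt2J (t-x))^b) * (x^α * (Stmt2J x)^β) by ring]
    rw [one_div, mul_inv, ← one_div, ← one_div]
  have hf0 : ∀ x ∈ Set.Ioo (0:ℝ) t, 0 ≤ f x := by
    intro x hx
    rw [hfsplit x hx]
    have hP : (0:ℝ) < (t-x)^a * (Stmt2J (t-x))^b :=
      mul_pos (Real.rpow_pos_of_pos (by linarith [hx.2]) _)
        (Real.rpow_pos_of_pos (Stmt2J_pos _) _)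
    have hQ : (0:ℝ) < x^α * (Stmt2J x)^β :=
      mul_pos (Real.rpow_pos_of_pos hx.1 _) (Real.rpow_pos_of_pos (Stmt2J_pos _) _)
    positivity
  have hQpos : ∀ x : ℝ, 0 < x → (0:ℝ) < x^α * (Stmt2J x)^β := fun x hx =>
    mul_pos (Real.rpow_pos_of_pos hx _) (Real.rpow_pos_of_pos (Stmt2J_pos _) _)
  have hPpos : ∀ x : ℝ, x < t → (0:ℝ) < (t-x)^a * (Stmt2J (t-x))^b := fun x hx =>
    mul_pos (Real.rpow_pos_of_pos (by linarith) _) (Real.rpow_pos_of_pos (Stmt2J_pos _) _)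
  by_cases ht1 : t ≤ 1
  · -- small time case
    -- piece 1 : on (0, t/2)
    have hb1 : ∀ x ∈ Set.Ioo (0:ℝ) (t/2), f x ≤ (t/2)^(-a) * x^(-α) := by
      intro x hx
      have hx0 : (0:ℝ) < x := hx.1
      have hxt : x < t := lt_of_lt_of_le hx.2 h2t
      rw [hfsplit x ⟨hx0, hxt⟩]
      have h1P : 1/((t-x)^a * (Stmt2J (t-x))^b) ≤ (t/2)^(-a) :=
        stmt2_inv_bound1 ht2 (by linarith [hx.2]) ha0 hb
      have h1Q : 1/(x^α * (Stmt2J x)^β) ≤ x^(-α) :=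
        stmt2_inv_bound1 hx0 le_rfl hα0 hβ
      exact mul_le_mul h1P h1Q (le_of_lt (one_div_pos.2 (hQpos x hx0)))
        (Real.rpow_nonneg ht2.le _)
    have hIb1 : IntervalIntegrable (fun x : ℝ => (t/2)^(-a) * x^(-α)) volume 0 (t/2) :=
      (intervalIntegrable_rpow' (by linarith)).const_mul _
    have hIf1 : IntervalIntegrable f volume 0 (t/2) :=
      stmt2_II_mono ht2.le hfm hIb1
        (fun x hx => hf0 x ⟨hx.1, lt_of_lt_of_le hx.2 h2t⟩) hb1
    have e1 : ∫ x in (0:ℝ)..(t/2), (t/2)^(-a) * x^(-α)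
        = (t/2)^(-a) * ((t/2)^(1-α)) / (1-α) := by
      rw [intervalIntegral.integral_const_mul, integral_rpow (Or.inl (by linarith)),
        show -α + 1 = 1 - α by ring, Real.zero_rpow (by linarith)]
      ring
    have key1 : (t/2)^(-a) * ((t/2)^(1-α)) ≤ 1 := by
      rw [← Real.rpow_add ht2, show -a + (1-α) = 1 - a - α by ring]
      exact Real.rpow_le_one ht2.le (by linarith) (by linarith)
    have i1 : ∫ x in (0:ℝ)..(t/2), f x ≤ 1/(1-α) := by
      calc ∫ x in (0:ℝ)..(t/2), f x ≤ ∫ x in (0:ℝ)..(t/2), (t/2)^(-a) * x^(-α) :=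
            stmt2_int_mono_Ioo ht2.le hIf1 hIb1 hb1
        _ = (t/2)^(-a) * ((t/2)^(1-α)) / (1-α) := e1
        _ ≤ 1/(1-α) := by gcongr
    -- piece 2 : on (t/2, t)
    have hb2 : ∀ x ∈ Set.Ioo (t/2) t, f x ≤ (t/2)^(-α) * (t-x)^(-a) := by
      intro x hx
      have hx0 : (0:ℝ) < x := lt_trans ht2 hx.1
      have htx : (0:ℝ) < t - x := by linarith [hx.2]
      rw [hfsplit x ⟨hx0, hx.2⟩]
      have h1P : 1/((t-x)^a * (Stmt2J (t-x))^b) ≤ (t-x)^(-a) :=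
        stmt2_inv_bound1 htx le_rfl ha0 hb
      have h1Q : 1/(x^α * (Stmt2J x)^β) ≤ (t/2)^(-α) :=
        stmt2_inv_bound1 ht2 hx.1.le hα0 hβ
      calc 1/((t-x)^a * (Stmt2J (t-x))^b) * (1/(x^α * (Stmt2J x)^β))
          ≤ (t-x)^(-a) * (t/2)^(-α) :=
            mul_le_mul h1P h1Q (le_of_lt (one_div_pos.2 (hQpos x hx0)))
              (Real.rpow_nonneg htx.le _)
        _ = (t/2)^(-α) * (t-x)^(-a) := mul_comm _ _
    have hIbase : IntervalIntegrable (fun x : ℝ => (t - x)^(-a)) volume (t/2) t := by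
      have h := (intervalIntegrable_rpow' (show (-1:ℝ) < -a by linarith)
        (a := 0) (b := t/2)).comp_sub_left t
      rw [sub_zero, show t - t/2 = t/2 by ring] at h
      exact h.symm
    have hIb2 : IntervalIntegrable (fun x : ℝ => (t/2)^(-α) * (t - x)^(-a)) volume (t/2) t :=
      hIbase.const_mul _
    have hIf2 : IntervalIntegrable f volume (t/2) t :=
      stmt2_II_mono h2t hfm hIb2
        (fun x hx => hf0 x ⟨lt_trans ht2 hx.1, hx.2⟩) hb2
    have e2 : ∫ x in (t/2)..t, (t/2)^(-α) * (t - x)^(-a)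
        = (t/2)^(-α) * ((t/2)^(1-a)) / (1-a) := by
      rw [intervalIntegral.integral_const_mul,
        intervalIntegral.integral_comp_sub_left (fun s => s^(-a)) t,
        sub_self, show t - t/2 = t/2 by ring, integral_rpow (Or.inl (by linarith)),
        show -a + 1 = 1 - a by ring, Real.zero_rpow (by linarith)]
      ring
    have key2 : (t/2)^(-α) * ((t/2)^(1-a)) ≤ 1 := by
      rw [← Real.rpow_add ht2, show -α + (1-a) = 1 - a - α by ring]
      exact Real.rpow_le_one ht2.le (by linarith) (by linarith)
    have i2 : ∫ x in (t/2)..t, f x ≤ 1/(1-a) := by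
      calc ∫ x in (t/2)..t, f x ≤ ∫ x in (t/2)..t, (t/2)^(-α) * (t-x)^(-a) :=
            stmt2_int_mono_Ioo h2t hIf2 hIb2 hb2
        _ = (t/2)^(-α) * ((t/2)^(1-a)) / (1-a) := e2
        _ ≤ 1/(1-a) := by gcongr
    have hsplit := intervalIntegral.integral_add_adjacent_intervals hIf1 hIf2
    have htot : ∫ x in (0:ℝ)..t, f x ≤ 1/(1-α) + 1/(1-a) := by
      rw [← hsplit]; exact add_le_add i1 i2
    -- RHS lower bound
    have hhalf : (1:ℝ)/2 ≤ (Stmt2J t)^(1-c-γ) := by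
      by_cases he : (0:ℝ) ≤ 1 - c - γ
      · linarith [Real.one_le_rpow (one_le_Stmt2J t) he]
      · have hJ2 : Stmt2J t ≤ 2 := (Stmt2J_le ht).trans (by linarith)
        have hst : (2:ℝ)^(1-c-γ) ≤ (Stmt2J t)^(1-c-γ) :=
          Real.rpow_le_rpow_of_nonpos hJt hJ2 (by linarith)
        have h21 : (2:ℝ)^(-1:ℝ) ≤ (2:ℝ)^(1-c-γ) :=
          Real.rpow_le_rpow_of_exponent_le one_le_two (by linarith)
        rw [Real.rpow_neg_one] at h21
        norm_num at h21
        linarith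
    have : C * (1/2) ≤ C * (Stmt2J t)^(1-c-γ) := by
      apply mul_le_mul_of_nonneg_left hhalf hC0.le
    have hCge : 1/(1-α) + 1/(1-a) ≤ C * (1/2) := by
      rw [hCdef]
      have h01 := mul_pos hK10 hCg0
      have h02 := mul_pos hK20 hCh0
      linarith
    linarith
  · -- large time case : 1 ≤ t
    have ht1' : (1:ℝ) ≤ t := le_of_lt (lt_of_not_ge ht1)
    obtain ⟨hIg, hintg⟩ := stmt2_lemA α β γ hα0 hα1 hβ hγ0 hγ1 h3 ht1'
    obtain ⟨hIh, hinth⟩ := stmt2_lemA a b c ha0 ha1 hb hc0 hc1 h2 ht1'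
    have hsub : Set.uIcc (0:ℝ) (t/2) ⊆ Set.uIcc (0:ℝ) t := by
      rw [Set.uIcc_of_le ht2.le, Set.uIcc_of_le ht]
      exact Set.Icc_subset_Icc le_rfl h2t
    have hJ2t : Stmt2J t ≤ 2 * t := by
      have := Stmt2J_le ht
      linarith
    have hhx : (1:ℝ)/2 ≤ t/2 := by linarith
    -- piece A : on (0, t/2)
    set KA : ℝ := 2^(a+b) * 4^c * (Stmt2J t)^(-c) with hKAdef
    have hKA0 : 0 < KA := mul_pos hK10 (Real.rpow_pos_of_pos hJt _)
    have hbA : ∀ x ∈ Set.Ioo (0:ℝ) (t/2),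
        f x ≤ KA * (x^(-α) * (Stmt2J x)^(-β)) := by
      intro x hx
      have hx0 : (0:ℝ) < x := hx.1
      have hxt : x < t := lt_of_lt_of_le hx.2 h2t
      have htx2 : t/2 ≤ t - x := by linarith [hx.2]
      have htxh : (1:ℝ)/2 ≤ t - x := le_trans hhx htx2
      rw [hfsplit x ⟨hx0, hxt⟩]
      have hQeq : 1/(x^α * (Stmt2J x)^β) = x^(-α) * (Stmt2J x)^(-β) := by
        rw [Real.rpow_neg hx0.le, Real.rpow_neg (Stmt2J_pos x).le, one_div, mul_inv]
      have hPb : 1/((t-x)^a * (Stmt2J (t-x))^b) ≤ KA := by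
        have s1 : 1/((t-x)^a * (Stmt2J (t-x))^b) ≤ 2^(a+b) * (t-x)^(-c) :=
          stmt2_inv_bound2 htxh ha0 hb hc0 h2
        have s2 : (t-x)^(-c) ≤ (t/2)^(-c) :=
          Real.rpow_le_rpow_of_nonpos ht2 htx2 (by linarith)
        have s3 : (t/2)^(-c) ≤ (Stmt2J t / 4)^(-c) := by
          apply Real.rpow_le_rpow_of_nonpos (by positivity) (by linarith) (by linarith)
        have s4 : (Stmt2J t / 4)^(-c) = 4^c * (Stmt2J t)^(-c) := by
          rw [Real.div_rpow hJt.le (by norm_num : (0:ℝ) ≤ 4), div_eq_mul_inv,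
            show ((4:ℝ)^(-c))⁻¹ = 4^c by
              rw [← Real.rpow_neg (by norm_num : (0:ℝ) ≤ 4), neg_neg],
            mul_comm]
        rw [hKAdef, mul_assoc]
        calc 1/((t-x)^a * (Stmt2J (t-x))^b) ≤ 2^(a+b) * (t-x)^(-c) := s1
          _ ≤ 2^(a+b) * (4^c * (Stmt2J t)^(-c)) := by
              apply mul_le_mul_of_nonneg_left _ (Real.rpow_nonneg (by norm_num) _)
              rw [← s4]
              exact s2.trans s3
      rw [← hQeq]
      exact mul_le_mul_of_nonneg_right hPb (le_of_lt (one_div_pos.2 (hQpos x hx0)))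
    have hIgA : IntervalIntegrable (fun x : ℝ => x^(-α) * (Stmt2J x)^(-β)) volume 0 (t/2) :=
      hIg.mono_set hsub
    have hIbA : IntervalIntegrable (fun x : ℝ => KA * (x^(-α) * (Stmt2J x)^(-β)))
        volume 0 (t/2) := hIgA.const_mul _
    have hIfA : IntervalIntegrable f volume 0 (t/2) :=
      stmt2_II_mono ht2.le hfm hIbA
        (fun x hx => hf0 x ⟨hx.1, lt_of_lt_of_le hx.2 h2t⟩) hbA
    have hgmono : ∫ x in (0:ℝ)..(t/2), x^(-α) * (Stmt2J x)^(-β)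
        ≤ ∫ x in (0:ℝ)..t, x^(-α) * (Stmt2J x)^(-β) := by
      have hIg2 : IntervalIntegrable (fun x : ℝ => x^(-α) * (Stmt2J x)^(-β))
          volume (t/2) t := by
        apply hIg.mono_set
        rw [Set.uIcc_of_le h2t, Set.uIcc_of_le ht]
        exact Set.Icc_subset_Icc ht2.le le_rfl
      have hpos : (0:ℝ) ≤ ∫ x in (t/2)..t, x^(-α) * (Stmt2J x)^(-β) := by
        apply intervalIntegral.integral_nonneg h2t
        intro u hu
        exact mul_nonneg (Real.rpow_nonneg (le_trans ht2.le hu.1) _)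
          (Real.rpow_nonneg (Stmt2J_pos u).le _)
      have := intervalIntegral.integral_add_adjacent_intervals hIgA hIg2
      linarith
    have iA : ∫ x in (0:ℝ)..(t/2), f x ≤ KA * (Cg * t^(1-γ)) := by
      calc ∫ x in (0:ℝ)..(t/2), f x
          ≤ ∫ x in (0:ℝ)..(t/2), KA * (x^(-α) * (Stmt2J x)^(-β)) :=
            stmt2_int_mono_Ioo ht2.le hIfA hIbA hbA
        _ = KA * ∫ x in (0:ℝ)..(t/2), x^(-α) * (Stmt2J x)^(-β) :=
            intervalIntegral.integral_const_mul _ _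
        _ ≤ KA * (Cg * t^(1-γ)) := by
            apply mul_le_mul_of_nonneg_left _ hKA0.le
            rw [hCgdef]
            exact hgmono.trans hintg
    have iA' : ∫ x in (0:ℝ)..(t/2), f x ≤ (2^(a+b) * 4^c * Cg) * (Stmt2J t)^(1-c-γ) := by
      have hstep : KA * (Cg * t^(1-γ)) ≤ KA * (Cg * (Stmt2J t)^(1-γ)) := by
        apply mul_le_mul_of_nonneg_left _ hKA0.le
        apply mul_le_mul_of_nonneg_left _ hCg0.le
        exact Real.rpow_le_rpow (by linarith) (self_le_Stmt2J (by linarith)) (by linarith)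
      have heq : KA * (Cg * (Stmt2J t)^(1-γ)) = (2^(a+b) * 4^c * Cg) * (Stmt2J t)^(1-c-γ) := by
        rw [hKAdef]
        rw [show 2^(a+b) * 4^c * (Stmt2J t)^(-c) * (Cg * (Stmt2J t)^(1-γ))
          = 2^(a+b) * 4^c * Cg * ((Stmt2J t)^(-c) * (Stmt2J t)^(1-γ)) by ring]
        rw [← Real.rpow_add hJt, show -c + (1-γ) = 1 - c - γ by ring]
      linarith [iA, hstep, heq.le]
    -- piece B : on (t/2, t)
    set KB : ℝ := 2^(α+β) * 4^γ * (Stmt2J t)^(-γ) with hKBdef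
    have hKB0 : 0 < KB := mul_pos hK20 (Real.rpow_pos_of_pos hJt _)
    have hbB : ∀ x ∈ Set.Ioo (t/2) t,
        f x ≤ KB * ((t-x)^(-a) * (Stmt2J (t-x))^(-b)) := by
      intro x hx
      have hx0 : (0:ℝ) < x := lt_trans ht2 hx.1
      have htx : (0:ℝ) < t - x := by linarith [hx.2]
      rw [hfsplit x ⟨hx0, hx.2⟩]
      have hPeq : 1/((t-x)^a * (Stmt2J (t-x))^b) = (t-x)^(-a) * (Stmt2J (t-x))^(-b) := by
        rw [Real.rpow_neg htx.le, Real.rpow_neg (Stmt2J_pos _).le, one_div, mul_inv]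
      have hQb : 1/(x^α * (Stmt2J x)^β) ≤ KB := by
        have s1 : 1/(x^α * (Stmt2J x)^β) ≤ 2^(α+β) * x^(-γ) :=
          stmt2_inv_bound2 (le_trans hhx hx.1.le) hα0 hβ hγ0 h3
        have s2 : x^(-γ) ≤ (t/2)^(-γ) :=
          Real.rpow_le_rpow_of_nonpos ht2 hx.1.le (by linarith)
        have s3 : (t/2)^(-γ) ≤ (Stmt2J t / 4)^(-γ) := by
          apply Real.rpow_le_rpow_of_nonpos (by positivity) (by linarith) (by linarith)
        have s4 : (Stmt2J t / 4)^(-γ) = 4^γ * (Stmt2J t)^(-γ) := by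
          rw [Real.div_rpow hJt.le (by norm_num : (0:ℝ) ≤ 4), div_eq_mul_inv,
            show ((4:ℝ)^(-γ))⁻¹ = 4^γ by
              rw [← Real.rpow_neg (by norm_num : (0:ℝ) ≤ 4), neg_neg],
            mul_comm]
        rw [hKBdef, mul_assoc]
        calc 1/(x^α * (Stmt2J x)^β) ≤ 2^(α+β) * x^(-γ) := s1
          _ ≤ 2^(α+β) * (4^γ * (Stmt2J t)^(-γ)) := by
              apply mul_le_mul_of_nonneg_left _ (Real.rpow_nonneg (by norm_num) _)
              rw [← s4]
              exact s2.trans s3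
      calc 1/((t-x)^a * (Stmt2J (t-x))^b) * (1/(x^α * (Stmt2J x)^β))
          ≤ 1/((t-x)^a * (Stmt2J (t-x))^b) * KB :=
            mul_le_mul_of_nonneg_left hQb (le_of_lt (one_div_pos.2 (hPpos x hx.2)))
        _ = KB * ((t-x)^(-a) * (Stmt2J (t-x))^(-b)) := by rw [hPeq, mul_comm]
    have hIhA : IntervalIntegrable (fun x : ℝ => x^(-a) * (Stmt2J x)^(-b)) volume 0 (t/2) :=
      hIh.mono_set hsub
    have hIhc : IntervalIntegrable (fun x : ℝ => (t-x)^(-a) * (Stmt2J (t-x))^(-b))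
        volume (t/2) t := by
      have h := hIhA.comp_sub_left t
      rw [sub_zero, show t - t/2 = t/2 by ring] at h
      exact h.symm
    have hIbB : IntervalIntegrable
        (fun x : ℝ => KB * ((t-x)^(-a) * (Stmt2J (t-x))^(-b))) volume (t/2) t :=
      hIhc.const_mul _
    have hIfB : IntervalIntegrable f volume (t/2) t :=
      stmt2_II_mono h2t hfm hIbB
        (fun x hx => hf0 x ⟨lt_trans ht2 hx.1, hx.2⟩) hbB
    have hhchange : ∫ x in (t/2)..t, (t-x)^(-a) * (Stmt2J (t-x))^(-b)
        = ∫ x in (0:ℝ)..(t/2), x^(-a) * (Stmt2J x)^(-b) := by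
      rw [intervalIntegral.integral_comp_sub_left (fun s => s^(-a) * (Stmt2J s)^(-b)) t,
        sub_self, show t - t/2 = t/2 by ring]
    have hhmono : ∫ x in (0:ℝ)..(t/2), x^(-a) * (Stmt2J x)^(-b)
        ≤ ∫ x in (0:ℝ)..t, x^(-a) * (Stmt2J x)^(-b) := by
      have hIh2 : IntervalIntegrable (fun x : ℝ => x^(-a) * (Stmt2J x)^(-b))
          volume (t/2) t := by
        apply hIh.mono_set
        rw [Set.uIcc_of_le h2t, Set.uIcc_of_le ht]
        exact Set.Icc_subset_Icc ht2.le le_rfl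
      have hpos : (0:ℝ) ≤ ∫ x in (t/2)..t, x^(-a) * (Stmt2J x)^(-b) := by
        apply intervalIntegral.integral_nonneg h2t
        intro u hu
        exact mul_nonneg (Real.rpow_nonneg (le_trans ht2.le hu.1) _)
          (Real.rpow_nonneg (Stmt2J_pos u).le _)
      have := intervalIntegral.integral_add_adjacent_intervals hIhA hIh2
      linarith
    have iB : ∫ x in (t/2)..t, f x ≤ KB * (Ch * t^(1-c)) := by
      calc ∫ x in (t/2)..t, f x
          ≤ ∫ x in (t/2)..t, KB * ((t-x)^(-a) * (Stmt2J (t-x))^(-b)) :=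
            stmt2_int_mono_Ioo h2t hIfB hIbB hbB
        _ = KB * ∫ x in (t/2)..t, (t-x)^(-a) * (Stmt2J (t-x))^(-b) :=
            intervalIntegral.integral_const_mul _ _
        _ ≤ KB * (Ch * t^(1-c)) := by
            apply mul_le_mul_of_nonneg_left _ hKB0.le
            rw [hhchange, hChdef]
            exact hhmono.trans hinth
    have iB' : ∫ x in (t/2)..t, f x ≤ (2^(α+β) * 4^γ * Ch) * (Stmt2J t)^(1-c-γ) := by
      have hstep : KB * (Ch * t^(1-c)) ≤ KB * (Ch * (Stmt2J t)^(1-c)) := by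
        apply mul_le_mul_of_nonneg_left _ hKB0.le
        apply mul_le_mul_of_nonneg_left _ hCh0.le
        exact Real.rpow_le_rpow (by linarith) (self_le_Stmt2J (by linarith)) (by linarith)
      have heq : KB * (Ch * (Stmt2J t)^(1-c)) = (2^(α+β) * 4^γ * Ch) * (Stmt2J t)^(1-c-γ) := by
        rw [hKBdef]
        rw [show 2^(α+β) * 4^γ * (Stmt2J t)^(-γ) * (Ch * (Stmt2J t)^(1-c))
          = 2^(α+β) * 4^γ * Ch * ((Stmt2J t)^(-γ) * (Stmt2J t)^(1-c)) by ring]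
        rw [← Real.rpow_add hJt, show -γ + (1-c) = 1 - c - γ by ring]
      linarith [iB, hstep, heq.le]
    have hsplit := intervalIntegral.integral_add_adjacent_intervals hIfA hIfB
    have hrp : (0:ℝ) ≤ (Stmt2J t)^(1-c-γ) := Real.rpow_nonneg hJt.le _
    have : ∫ x in (0:ℝ)..t, f x
        ≤ (2^(a+b) * 4^c * Cg + 2^(α+β) * 4^γ * Ch) * (Stmt2J t)^(1-c-γ) := by
      rw [← hsplit, add_mul]
      exact add_le_add iA' iB'
    have hfin : (2^(a+b) * 4^c * Cg + 2^(α+β) * 4^γ * Ch) * (Stmt2J t)^(1-c-γ)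
        ≤ C * (Stmt2J t)^(1-c-γ) := by
      apply mul_le_mul_of_nonneg_right _ hrp
      rw [hCdef]
      linarith
    linarith
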